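/- Let G be a connected weighted graph, let i ≠ j be vertices, and let G' be the weighted graph obtained from G by replacing the edge weight λ_{ij} with a new weight λ'_{ij} satisfying λ_{ij} < λ'_{ij} ≤ 0 (all other weights unchanged). Then the largest root of μ(G) is strictly greater than the largest root of μ(G'). -/

import Mathlib

open Polynomial
open scoped Classical

/-- A matching of the weighted graph with edge weights `lam`, inside the vertex set `A`:
a set of pairs `(j,k)` with `j < k`, `lam j k ≠ 0`, endpoints in `A`,
no two pairs sharing a vertex. -/
def IsMatching {n : ℕ} (lam : Fin n → Fin n → ℝ) (A : Finset (Fin n))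
    (M : Finset (Fin n × Fin n)) : Prop :=
  (∀ e ∈ M, e.1 < e.2 ∧ lam e.1 e.2 ≠ 0 ∧ e.1 ∈ A ∧ e.2 ∈ A) ∧
  ∀ e ∈ M, ∀ f ∈ M, e ≠ f → e.1 ≠ f.1 ∧ e.1 ≠ f.2 ∧ e.2 ≠ f.1 ∧ e.2 ≠ f.2

/-- The vertices covered by a matching. -/
def mVerts {n : ℕ} (M : Finset (Fin n × Fin n)) : Finset (Fin n) :=
  M.image Prod.fst ∪ M.image Prod.snd

/-- The finite set of matchings inside the vertex set `A`. -/
noncomputable def matchings {n : ℕ} (lam : Fin n → Fin n → ℝ) (A : Finset (Fin n)) :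
    Finset (Finset (Fin n × Fin n)) :=
  Finset.univ.filter fun M => IsMatching lam A M

/-- The weighted matching polynomial of the induced weighted subgraph on the vertex set `A`
(the matching polynomial of the empty graph is `1`). -/
noncomputable def mu {n : ℕ} (r : Fin n → ℝ) (lam : Fin n → Fin n → ℝ)
    (A : Finset (Fin n)) : Polynomial ℝ :=
  ∑ M ∈ matchings lam A,
    (∏ i ∈ A \ mVerts M, (X - C (r i))) * C (∏ e ∈ M, lam e.1 e.2)

/-- The multivariate matching polynomial evaluated at the complex numbers `x 1, …, x n`. -/
noncomputable def muC {n : ℕ} (lam : Fin n → Fin n → ℝ) (x : Fin n → ℂ) : ℂ :=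
  ∑ M ∈ matchings lam (Finset.univ : Finset (Fin n)),
    (∏ i ∈ Finset.univ \ mVerts M, x i) * ∏ e ∈ M, (lam e.1 e.2 : ℂ)

/-- The constant `B_G`: for `n ≥ 3` the maximum over vertices `j` and sets
`A ⊆ [n] ∖ {j}` with `|A| = n - 2` of `∑_{k ∈ A} (-λ_{jk})`; `-λ_{12}/4` for `n = 2`;
`0` for `n = 1`. -/
noncomputable def BG (n : ℕ) (lam : Fin n → Fin n → ℝ) : ℝ :=
  if 3 ≤ n then
    sSup {S : ℝ | ∃ j : Fin n, ∃ A : Finset (Fin n),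
      j ∉ A ∧ A.card = n - 2 ∧ S = ∑ k ∈ A, -lam j k}
  else if h : n = 2 then -lam ⟨0, by omega⟩ ⟨1, by omega⟩ / 4
  else 0

/-- `l` is a path from `i` to `j` inside the vertex set `A`: a nonempty list of distinct
vertices of `A`, starting at `i`, ending at `j`, with consecutive vertices joined by
edges of nonzero weight. -/
def IsPathIn {n : ℕ} (lam : Fin n → Fin n → ℝ) (A : Finset (Fin n)) (i j : Fin n)
    (l : List (Fin n)) : Prop :=
  l ≠ [] ∧ l.Nodup ∧ (∀ v ∈ l, v ∈ A) ∧ l.head? = some i ∧ l.getLast? = some j ∧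
    l.Chain' fun u v => lam u v ≠ 0

/-- `λ_c`: the product of `-λ_e` over the edges `e` of the path `c` (equal to `1` for a
trivial path). -/
def pathWeight {n : ℕ} (lam : Fin n → Fin n → ℝ) (l : List (Fin n)) : ℝ :=
  ((l.zip l.tail).map fun p => -lam p.1 p.2).prod

/-- A real polynomial viewed as a rational function. -/
noncomputable def toRF (p : Polynomial ℝ) : RatFunc ℝ :=
  algebraMap (Polynomial ℝ) (RatFunc ℝ) p

/-- The graph continued fraction `α_v = μ(A)/μ(A ∖ v)` as a rational function. -/
noncomputable def alpha {n : ℕ} (r : Fin n → ℝ) (lam : Fin n → Fin n → ℝ) (v : Fin n)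
    (A : Finset (Fin n)) : RatFunc ℝ :=
  toRF (mu r lam A) / toRF (mu r lam (A.erase v))

/-- `λ_{i∼j} = -(∑_{c ∈ [i→j]} λ_c · μ(A∖c)²) / μ(A∖{i,j})²` as a rational function. -/
noncomputable def lamSim {n : ℕ} (r : Fin n → ℝ) (lam : Fin n → Fin n → ℝ) (i j : Fin n)
    (A : Finset (Fin n)) : RatFunc ℝ :=
  -(∑ᶠ l ∈ {l : List (Fin n) | IsPathIn lam A i j l},
      toRF (C (pathWeight lam l) * mu r lam (A \ l.toFinset) ^ 2)) /
    toRF (mu r lam ((A.erase i).erase j)) ^ 2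

/-- The value of a rational function at `θ`, taken after cancelling common factors;
`none` encodes the value `∞` (a pole). -/
noncomputable def valAt (f : RatFunc ℝ) (θ : ℝ) : Option ℝ :=
  if f.denom.eval θ = 0 then none else some (f.num.eval θ / f.denom.eval θ)

/-- The set `0_{θ,A}` of θ-essential vertices: `m_θ(A∖v) = m_θ(A) - 1`. -/
def zeroSet {n : ℕ} (r : Fin n → ℝ) (lam : Fin n → Fin n → ℝ) (θ : ℝ)
    (A : Finset (Fin n)) : Set (Fin n) :=
  {v | v ∈ A ∧
    (mu r lam A).rootMultiplicity θ = (mu r lam (A.erase v)).rootMultiplicity θ + 1}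

/-- The set `∞_{θ,A}`: `m_θ(A∖v) = m_θ(A) + 1`. -/
def infSet {n : ℕ} (r : Fin n → ℝ) (lam : Fin n → Fin n → ℝ) (θ : ℝ)
    (A : Finset (Fin n)) : Set (Fin n) :=
  {v | v ∈ A ∧
    (mu r lam (A.erase v)).rootMultiplicity θ = (mu r lam A).rootMultiplicity θ + 1}

/-- The set `+_{θ,A}`: `m_θ(A∖v) = m_θ(A)` and `α_v(A)(θ) > 0`. -/
def plusSet {n : ℕ} (r : Fin n → ℝ) (lam : Fin n → Fin n → ℝ) (θ : ℝ)
    (A : Finset (Fin n)) : Set (Fin n) :=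
  {v | v ∈ A ∧
    (mu r lam (A.erase v)).rootMultiplicity θ = (mu r lam A).rootMultiplicity θ ∧
    ∃ t : ℝ, valAt (alpha r lam v A) θ = some t ∧ 0 < t}

/-- The set `−_{θ,A}`: `m_θ(A∖v) = m_θ(A)` and `α_v(A)(θ) < 0`. -/
def minusSet {n : ℕ} (r : Fin n → ℝ) (lam : Fin n → Fin n → ℝ) (θ : ℝ)
    (A : Finset (Fin n)) : Set (Fin n) :=
  {v | v ∈ A ∧
    (mu r lam (A.erase v)).rootMultiplicity θ = (mu r lam A).rootMultiplicity θ ∧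
    ∃ t : ℝ, valAt (alpha r lam v A) θ = some t ∧ t < 0}

/-- The frontier `∂0_{θ,A}`: vertices not in `0_{θ,A}` with a neighbor in `0_{θ,A}`. -/
def frontierZero {n : ℕ} (r : Fin n → ℝ) (lam : Fin n → Fin n → ℝ) (θ : ℝ)
    (A : Finset (Fin n)) : Set (Fin n) :=
  {v | v ∈ A ∧ v ∉ zeroSet r lam θ A ∧ ∃ w ∈ zeroSet r lam θ A, lam v w ≠ 0}

/-- The underlying simple graph: edges are the pairs with nonzero edge weight. -/
def wGraph {n : ℕ} (lam : Fin n → Fin n → ℝ) : SimpleGraph (Fin n) :=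
  SimpleGraph.fromRel fun j k => lam j k ≠ 0

/-!
Put `δ = λ'_{ij} - λ_{ij} > 0`. Expanding the matching polynomial at the vertex `i` gives
`μ(G') = μ(G) + δ μ(G - i - j)`, so it suffices that `μ(G - i - j)` is positive on `[z_G, ∞)`.

Every induced subgraph `H` has `μ(H) > 0` on `(z_G, ∞)`: by the vertex recursion
`μ(A) = (x - r_v) μ(A - v) + ∑_u λ_{vu} μ(A - v - u)` and induction, at the largest root `w` of
`μ(A - v)` all terms `λ_{vu} μ(A - v - u)(w)` are `≤ 0`, so `μ(A)` cannot be positive at `w`.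

At `z_G` itself connectivity enters. A smallest vertex set `C ⊊ V` with `μ(C)(z_G) = 0` induces a
connected graph, since `μ` is multiplicative over vertex sets without edges between them. Add to
`C` a neighbour `y`: either `C ∪ {y}` is a smaller connected graph, in which (by induction) the
proper subset `C` has `μ(C)(z_G) > 0`; or `C ∪ {y} = V`, and the recursion at `y` gives
`μ(G)(z_G) < 0`.
-/

open Filter

lemma Continuous.nonneg_of_forall_gt_pos {f : ℝ → ℝ} (hf : Continuous f) {t : ℝ}
    (h : ∀ x > t, 0 < f x) : 0 ≤ f t :=
  ge_of_tendsto ((hf.tendsto t).mono_left (nhdsWithin_le_nhds (s := Set.Ioi t)))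
    (eventually_nhdsWithin_of_forall fun x hx => (h x hx).le)

namespace Polynomial.Monic

variable {p : ℝ[X]}

lemma exists_isRoot_ge (hp : p.Monic) {y : ℝ} (hy : p.eval y ≤ 0) : ∃ w, y ≤ w ∧ p.IsRoot w := by
  have hdeg : 0 < p.degree := by
    by_contra! h
    rw [eq_one_of_monic_natDegree_zero hp (natDegree_eq_zero_iff_degree_le_zero.2 h)] at hy
    norm_num at hy
  obtain ⟨Y, hY, hyY⟩ := ((tendsto_atTop_of_leadingCoeff_nonneg p hdeg
    (by simp [hp.leadingCoeff])).eventually_gt_atTop 0 |>.and (eventually_ge_atTop y)).exists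
  obtain ⟨w, hw, hw0⟩ := intermediate_value_Icc hyY p.continuous.continuousOn ⟨hy, hY.le⟩
  exact ⟨w, hw.1, hw0⟩

lemma eval_pos_of_forall_isRoot_le (hp : p.Monic) {z : ℝ} (h : ∀ w, p.IsRoot w → w ≤ z)
    {x : ℝ} (hx : z < x) : 0 < p.eval x := by
  by_contra! hx'
  obtain ⟨w, hxw, hw⟩ := hp.exists_isRoot_ge hx'
  linarith [h w hw]

lemma exists_isRoot_ge_forall_gt_eval_pos (hp : p.Monic) {y : ℝ} (hy : p.eval y ≤ 0) :
    ∃ w, y ≤ w ∧ p.IsRoot w ∧ ∀ x > w, 0 < p.eval x := by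
  obtain ⟨w₀, hyw₀, hw₀⟩ := hp.exists_isRoot_ge hy
  have hne : p.roots.toFinset.Nonempty := ⟨w₀, by simpa [hp.ne_zero] using hw₀⟩
  have hmax : ∀ x, p.IsRoot x → x ≤ p.roots.toFinset.max' hne := fun x hx =>
    Finset.le_max' _ _ (by simpa [hp.ne_zero] using hx)
  exact ⟨_, hyw₀.trans (hmax w₀ hw₀), by simpa [hp.ne_zero] using Finset.max'_mem _ hne,
    fun x hx => hp.eval_pos_of_forall_isRoot_le hmax hx⟩

end Polynomial.Monic

namespace MatchingPolynomial

open Finset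

variable {n : ℕ} {r : Fin n → ℝ} {lam lam' : Fin n → Fin n → ℝ} {A B D : Finset (Fin n)}
  {M : Finset (Fin n × Fin n)}

noncomputable def matchingTerm (r : Fin n → ℝ) (lam : Fin n → Fin n → ℝ) (A : Finset (Fin n))
    (M : Finset (Fin n × Fin n)) : ℝ[X] :=
  (∏ i ∈ A \ mVerts M, (X - C (r i))) * C (∏ e ∈ M, lam e.1 e.2)

lemma mu_eq_sum : mu r lam A = ∑ M ∈ matchings lam A, matchingTerm r lam A M := rfl

lemma mem_matchings : M ∈ matchings lam A ↔ IsMatching lam A M := by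
  simp [matchings]

lemma mem_mVerts {v : Fin n} : v ∈ mVerts M ↔ ∃ e ∈ M, e.1 = v ∨ e.2 = v := by
  simp only [mVerts, mem_union, mem_image]
  aesop

lemma mVerts_insert (e : Fin n × Fin n) :
    mVerts (insert e M) = insert e.1 (insert e.2 (mVerts M)) := by
  ext v
  simp only [mem_mVerts, mem_insert]
  aesop

lemma isMatching_erase_iff {v : Fin n} :
    IsMatching lam (A.erase v) M ↔ IsMatching lam A M ∧ v ∉ mVerts M := by
  simp only [IsMatching, mem_erase, mem_mVerts, not_exists, not_and, not_or]
  grind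

lemma isMatching_insert_iff {e : Fin n × Fin n} (he : e ∉ M) :
    IsMatching lam A (insert e M) ↔ (e.1 < e.2 ∧ lam e.1 e.2 ≠ 0 ∧ e.1 ∈ A ∧ e.2 ∈ A) ∧
      IsMatching lam A M ∧ e.1 ∉ mVerts M ∧ e.2 ∉ mVerts M := by
  simp only [IsMatching, forall_mem_insert, mem_mVerts, not_exists, not_and, not_or]
  grind

lemma matchings_empty : matchings lam (∅ : Finset (Fin n)) = {∅} := by
  ext M
  simp only [mem_matchings, IsMatching, notMem_empty, and_false, and_self, imp_false,
    mem_singleton, eq_empty_iff_forall_notMem]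
  aesop

@[simp]
lemma mu_empty : mu r lam (∅ : Finset (Fin n)) = 1 := by
  simp [mu_eq_sum, matchings_empty, matchingTerm]

lemma degree_matchingTerm_lt (hM : IsMatching lam A M) (hne : M ≠ ∅) :
    (matchingTerm r lam A M).degree < A.card := by
  obtain ⟨e, he⟩ := nonempty_iff_ne_empty.2 hne
  have hsub : A \ mVerts M ⊂ A :=
    sdiff_ssubset (fun v hv => ?_) ⟨e.1, mem_mVerts.2 ⟨e, he, Or.inl rfl⟩⟩
  · calc (matchingTerm r lam A M).degree
        ≤ (∏ i ∈ A \ mVerts M, (X - C (r i))).degree + (C (∏ e ∈ M, lam e.1 e.2)).degree :=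
          degree_mul_le _ _
      _ ≤ (∏ i ∈ A \ mVerts M, (X - C (r i))).degree + 0 := by gcongr; exact degree_C_le
      _ = (A \ mVerts M).card := by simp [degree_prod]
      _ < A.card := by exact_mod_cast card_lt_card hsub
  · obtain ⟨f, hf, rfl | rfl⟩ := mem_mVerts.1 hv
    exacts [(hM.1 f hf).2.2.1, (hM.1 f hf).2.2.2]

lemma mu_monic (r : Fin n → ℝ) (lam : Fin n → Fin n → ℝ) (A : Finset (Fin n)) :
    (mu r lam A).Monic := by
  have hempty : ∅ ∈ matchings lam A := mem_matchings.2 (by simp [IsMatching])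
  have hterm : matchingTerm r lam A ∅ = ∏ i ∈ A, (X - C (r i)) := by simp [matchingTerm, mVerts]
  rw [mu_eq_sum, ← add_sum_erase _ _ hempty, hterm]
  refine (monic_prod_of_monic _ _ fun i _ => monic_X_sub_C (r i)).add_of_left ?_
  refine (degree_sum_le _ _).trans_lt ?_
  have hdeg : (∏ i ∈ A, (X - C (r i))).degree = (A.card : WithBot ℕ) := by simp [degree_prod]
  rw [hdeg, Finset.sup_lt_iff (WithBot.bot_lt_coe _)]
  intro M hM
  simpa using degree_matchingTerm_lt (mem_matchings.1 (mem_of_mem_erase hM)) (ne_of_mem_erase hM)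

lemma mu_congr (h : ∀ a ∈ A, ∀ b ∈ A, a < b → lam a b = lam' a b) :
    mu r lam A = mu r lam' A := by
  have hM : matchings lam A = matchings lam' A := by
    ext M
    simp only [mem_matchings, IsMatching]
    grind
  rw [mu_eq_sum, mu_eq_sum, hM]
  refine sum_congr rfl fun M hM => ?_
  have hM := (mem_matchings.1 hM).1
  rw [matchingTerm, matchingTerm,
    prod_congr rfl fun e he => h _ (hM e he).2.2.1 _ (hM e he).2.2.2 (hM e he).1]

lemma matchingTerm_erase {v : Fin n} (hv : v ∈ A) (hM : v ∉ mVerts M) :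
    matchingTerm r lam A M = (X - C (r v)) * matchingTerm r lam (A.erase v) M := by
  rw [matchingTerm, matchingTerm, erase_sdiff_comm, ← mul_assoc,
    mul_prod_erase _ (fun i => X - C (r i)) (mem_sdiff.2 ⟨hv, hM⟩)]

lemma matchingTerm_insert {a b : Fin n} (hM : (a, b) ∉ M) :
    matchingTerm r lam A (insert (a, b) M) =
      C (lam a b) * matchingTerm r lam ((A.erase a).erase b) M := by
  have hverts : A \ mVerts (insert (a, b) M) = ((A.erase a).erase b) \ mVerts M := by
    rw [mVerts_insert, sdiff_insert, sdiff_insert, erase_sdiff_comm, erase_sdiff_comm,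
      erase_right_comm]
  rw [matchingTerm, matchingTerm, hverts, prod_insert hM, C_mul]
  ring

lemma sum_matchingTerm_filter_mem {a b : Fin n} (hab : a < b) (ha : a ∈ A) (hb : b ∈ A) :
    ∑ M ∈ (matchings lam A).filter ((a, b) ∈ ·), matchingTerm r lam A M =
      C (lam a b) * mu r lam ((A.erase a).erase b) := by
  by_cases h0 : lam a b = 0
  · rw [h0, C_0, zero_mul]
    refine sum_eq_zero fun M hM => ?_
    obtain ⟨hM, habM⟩ := mem_filter.1 hM
    exact absurd h0 ((mem_matchings.1 hM).1 _ habM).2.1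
  have hsub : ∀ M', IsMatching lam ((A.erase a).erase b) M' ↔
      IsMatching lam A M' ∧ a ∉ mVerts M' ∧ b ∉ mVerts M' := by
    simp [isMatching_erase_iff, and_assoc]
  have hnot : ∀ M', IsMatching lam ((A.erase a).erase b) M' → (a, b) ∉ M' := fun M' hM' habM' =>
    ((hsub M').1 hM').2.1 (mem_mVerts.2 ⟨_, habM', Or.inl rfl⟩)
  rw [mu_eq_sum, mul_sum]
  symm
  refine sum_nbij' (insert (a, b)) (·.erase (a, b)) (fun M' hM' => ?_) (fun M hM => ?_)
    (fun M' hM' => erase_insert (hnot M' (mem_matchings.1 hM')))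
    (fun M hM => insert_erase (mem_filter.1 hM).2)
    (fun M' hM' => (matchingTerm_insert (hnot M' (mem_matchings.1 hM'))).symm)
  · rw [mem_matchings, hsub] at hM'
    rw [mem_filter, mem_matchings, isMatching_insert_iff (hnot M' ((hsub M').2 hM'))]
    exact ⟨⟨⟨hab, h0, ha, hb⟩, hM'⟩, mem_insert_self _ _⟩
  · obtain ⟨hM, habM⟩ := mem_filter.1 hM
    rw [mem_matchings, ← insert_erase habM, isMatching_insert_iff (notMem_erase _ _)] at hM
    rw [mem_matchings, hsub]
    exact hM.2

-- Edges are stored as pairs `(j, k)` with `j < k`, so the edge `{v, u}` is `(min v u, max v u)`.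
lemma mem_mVerts_iff_exists_min_max (hM : IsMatching lam A M) {v : Fin n} :
    v ∈ mVerts M ↔ ∃ u ∈ A.erase v, (min v u, max v u) ∈ M := by
  rw [mem_mVerts]
  constructor
  · rintro ⟨e, he, hev⟩
    obtain ⟨hlt, -, h1, h2⟩ := hM.1 e he
    rcases hev with rfl | rfl
    · exact ⟨e.2, mem_erase.2 ⟨hlt.ne', h2⟩, by simpa [min_eq_left hlt.le, max_eq_right hlt.le]⟩
    · exact ⟨e.1, mem_erase.2 ⟨hlt.ne, h1⟩, by simpa [min_eq_right hlt.le, max_eq_left hlt.le]⟩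
  · rintro ⟨u, -, hu⟩
    exact ⟨_, hu, by rcases le_total v u with h | h <;> simp [h]⟩

lemma pairwiseDisjoint_filter_min_max_mem (v : Fin n) :
    (↑(A.erase v) : Set (Fin n)).PairwiseDisjoint
      fun u => (matchings lam A).filter ((min v u, max v u) ∈ ·) := by
  intro u hu u' hu' huu'
  refine disjoint_filter.2 fun M hM he hf => ?_
  have := (mem_matchings.1 hM).2 _ he _ hf
  simp only [coe_erase, Set.mem_sdiff, Set.mem_singleton_iff] at hu hu'
  rcases le_total v u with h | h <;> rcases le_total v u' with h' | h' <;>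
    simp_all [Prod.ext_iff]

theorem mu_eq_X_sub_C_mul_add (hsym : ∀ x y, lam x y = lam y x) {v : Fin n} (hv : v ∈ A) :
    mu r lam A = (X - C (r v)) * mu r lam (A.erase v)
      + ∑ u ∈ A.erase v, C (lam v u) * mu r lam ((A.erase v).erase u) := by
  rw [mu_eq_sum, ← sum_filter_not_add_sum_filter _ (v ∈ mVerts ·)]
  congr 1
  · have hfree : (matchings lam A).filter (v ∉ mVerts ·) = matchings lam (A.erase v) := by
      ext M
      simp [mem_matchings, isMatching_erase_iff]
    rw [hfree, mu_eq_sum, mul_sum]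
    exact sum_congr rfl fun M hM =>
      matchingTerm_erase hv (isMatching_erase_iff.1 (mem_matchings.1 hM)).2
  · have hcovered : (matchings lam A).filter (v ∈ mVerts ·) =
        (A.erase v).biUnion fun u => (matchings lam A).filter ((min v u, max v u) ∈ ·) := by
      ext M
      simp only [mem_filter, mem_biUnion]
      constructor
      · rintro ⟨hM, hvM⟩
        obtain ⟨u, hu, huM⟩ := (mem_mVerts_iff_exists_min_max (mem_matchings.1 hM)).1 hvM
        exact ⟨u, hu, hM, huM⟩
      · rintro ⟨u, hu, hM, huM⟩
        exact ⟨hM, (mem_mVerts_iff_exists_min_max (mem_matchings.1 hM)).2 ⟨u, hu, huM⟩⟩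
    rw [hcovered, sum_biUnion (pairwiseDisjoint_filter_min_max_mem v)]
    refine sum_congr rfl fun u hu => ?_
    obtain ⟨hne, huA⟩ := mem_erase.1 hu
    rcases lt_or_gt_of_ne hne with h | h
    · rw [min_eq_right h.le, max_eq_left h.le, sum_matchingTerm_filter_mem h huA hv, hsym,
        erase_right_comm]
    · rw [min_eq_left h.le, max_eq_right h.le, sum_matchingTerm_filter_mem h hv huA]

theorem mu_union (hsym : ∀ x y, lam x y = lam y x) (hdisj : Disjoint B D)
    (hsep : ∀ x ∈ B, ∀ y ∈ D, lam x y = 0) : mu r lam (B ∪ D) = mu r lam B * mu r lam D := by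
  induction B using Finset.strongInduction with
  | H B ih =>
  rcases B.eq_empty_or_nonempty with rfl | ⟨v, hv⟩
  · simp
  have ih' : ∀ S ⊆ B.erase v, mu r lam (S ∪ D) = mu r lam S * mu r lam D := fun S hS =>
    ih S (hS.trans_ssubset (erase_ssubset hv))
      (disjoint_of_subset_left (hS.trans (erase_subset _ _)) hdisj)
      fun x hx => hsep x (erase_subset _ _ (hS hx))
  have herase : ∀ {S : Finset (Fin n)} {u : Fin n}, u ∉ D → (S ∪ D).erase u = S.erase u ∪ D :=
    fun hu => by rw [erase_union_distrib, erase_eq_of_notMem hu]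
  have hD : ∑ u ∈ D, C (lam v u) * mu r lam ((B.erase v ∪ D).erase u) = 0 :=
    sum_eq_zero fun u hu => by rw [hsep v hv u hu, C_0, zero_mul]
  rw [mu_eq_X_sub_C_mul_add hsym (mem_union_left D hv), herase (disjoint_left.1 hdisj hv),
    sum_union (disjoint_of_subset_left (erase_subset _ _) hdisj), hD, add_zero, ih' _ subset_rfl,
    sum_congr rfl fun u hu => by
      rw [herase (disjoint_left.1 hdisj (mem_of_mem_erase hu)), ih' _ (erase_subset _ _)],
    mu_eq_X_sub_C_mul_add hsym hv, add_mul, sum_mul]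
  simp only [mul_assoc]

theorem mu_eq_add_of_eq_off_edge (hsym : ∀ x y, lam x y = lam y x)
    (hsym' : ∀ x y, lam' x y = lam' y x) {i j : Fin n} (hi : i ∈ A) (hj : j ∈ A) (hij : i ≠ j)
    (hother : ∀ a b, ¬((a = i ∧ b = j) ∨ (a = j ∧ b = i)) → lam' a b = lam a b) :
    mu r lam' A = mu r lam A + C (lam' i j - lam i j) * mu r lam ((A.erase i).erase j) := by
  have hoff : ∀ {S : Finset (Fin n)}, i ∉ S → mu r lam' S = mu r lam S := fun hS =>
    (mu_congr fun a ha b hb _ =>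
      (hother a b (by rintro (⟨rfl, -⟩ | ⟨-, rfl⟩) <;> contradiction)).symm).symm
  have hj' : j ∈ A.erase i := mem_erase.2 ⟨hij.symm, hj⟩
  have hiS : ∀ u, i ∉ (A.erase i).erase u := fun u h => notMem_erase i A (mem_of_mem_erase h)
  rw [mu_eq_X_sub_C_mul_add hsym' hi, mu_eq_X_sub_C_mul_add hsym hi, hoff (notMem_erase i A),
    ← add_sum_erase _ _ hj', ← add_sum_erase _ _ hj', hoff (hiS j),
    sum_congr rfl fun u hu => by rw [hother i u (by grind), hoff (hiS u)], C_sub]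
  ring

lemma eval_mu_of_eval_erase_eq_zero (hsym : ∀ x y, lam x y = lam y x) {v : Fin n} (hv : v ∈ A)
    {x : ℝ} (h0 : (mu r lam (A.erase v)).eval x = 0) :
    (mu r lam A).eval x = ∑ u ∈ A.erase v, lam v u * (mu r lam ((A.erase v).erase u)).eval x := by
  simp [mu_eq_X_sub_C_mul_add hsym hv, eval_finsetSum, h0]

theorem eval_mu_pos_of_subset (hsym : ∀ x y, lam x y = lam y x) (hnonpos : ∀ x y, lam x y ≤ 0)
    {t : ℝ} (hA : ∀ x > t, 0 < (mu r lam A).eval x) (hBA : B ⊆ A) :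
    ∀ x > t, 0 < (mu r lam B).eval x := by
  induction A using Finset.strongInduction generalizing B t with
  | H A ih =>
  rcases hBA.eq_or_ssubset with rfl | hBA
  · exact hA
  obtain ⟨v, hvA, hvB⟩ := exists_of_ssubset hBA
  suffices hAv : ∀ x > t, 0 < (mu r lam (A.erase v)).eval x from
    ih _ (erase_ssubset hvA) hAv (subset_erase.2 ⟨hBA.subset, hvB⟩)
  intro y hy
  by_contra! hy0
  obtain ⟨w, hyw, hw, hpos⟩ := (mu_monic r lam _).exists_isRoot_ge_forall_gt_eval_pos hy0
  have hsub : ∀ u ∈ A.erase v, 0 ≤ (mu r lam ((A.erase v).erase u)).eval w := fun u _ =>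
    (Polynomial.continuous _).nonneg_of_forall_gt_pos
      (ih _ (erase_ssubset hvA) hpos (erase_subset _ _))
  have hAw : (mu r lam A).eval w ≤ 0 := by
    rw [eval_mu_of_eval_erase_eq_zero hsym hvA hw]
    exact sum_nonpos fun u hu => mul_nonpos_of_nonpos_of_nonneg (hnonpos v u) (hsub u hu)
  linarith [hA w (by linarith)]

def IsConnectedSet (lam : Fin n → Fin n → ℝ) (A : Finset (Fin n)) : Prop :=
  ∀ C ⊆ A, (∀ x ∈ C, ∀ y ∈ A \ C, lam x y = 0) → C = ∅ ∨ C = A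

lemma isConnectedSet_univ (hsym : ∀ x y, lam x y = lam y x) (h : (wGraph lam).Connected) :
    IsConnectedSet lam univ := by
  intro C _ hsep
  by_contra! hC
  obtain ⟨a, ha⟩ := hC.1
  obtain ⟨b, hb⟩ : ∃ b, b ∉ C := by simpa [eq_univ_iff_forall] using hC.2
  obtain ⟨d, -, hd1, hd2⟩ := (h.preconnected a b).some.exists_boundary_dart C ha hb
  have hadj := d.adj
  have h0 : lam d.fst d.snd = 0 := hsep _ hd1 _ (by simpa using hd2)
  simp [wGraph, hsym d.snd d.fst, h0] at hadj

lemma IsConnectedSet.insert (hsym : ∀ x y, lam x y = lam y x) {C : Finset (Fin n)}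
    (hC : IsConnectedSet lam C) {x y : Fin n} (hx : x ∈ C) (hxy : lam x y ≠ 0) :
    IsConnectedSet lam (insert y C) := by
  intro E hE hsep
  rcases hC (E ∩ C) inter_subset_right fun a ha b hb => hsep a (mem_of_mem_inter_left ha) b
      (by grind) with h | h
  · have hxE : x ∉ E := fun hxE => by simpa [h] using mem_inter.2 ⟨hxE, hx⟩
    refine Or.inl (eq_empty_of_forall_notMem fun a ha => ?_)
    have hay : a = y := by
      by_contra hay
      simpa [h] using mem_inter.2 ⟨ha, (mem_insert.1 (hE ha)).resolve_left hay⟩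
    subst hay
    exact hxy (by rw [hsym]; exact hsep a ha x (by grind))
  · have hCE : C ⊆ E := fun c hc => mem_of_mem_inter_left (h.symm ▸ hc)
    refine Or.inr (subset_antisymm hE (insert_subset_iff.2 ⟨?_, hCE⟩))
    by_contra hyE
    exact hxy (hsep x (hCE hx) y (by grind))

theorem exists_isConnectedSet_eval_mu_eq_zero (hsym : ∀ x y, lam x y = lam y x) {t : ℝ}
    (hB : (mu r lam B).eval t = 0) :
    ∃ C ⊆ B, C.Nonempty ∧ IsConnectedSet lam C ∧ (mu r lam C).eval t = 0 := by
  obtain ⟨C, hC, hmin⟩ := exists_min_image (B.powerset.filter fun C => (mu r lam C).eval t = 0)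
    card ⟨B, by simpa using hB⟩
  simp only [mem_filter, mem_powerset] at hC hmin
  refine ⟨C, hC.1, nonempty_iff_ne_empty.2 fun h => by simp [h] at hC, fun E hE hsep => ?_, hC.2⟩
  have hsplit := mu_union (r := r) hsym disjoint_sdiff hsep
  rw [union_sdiff_of_subset hE] at hsplit
  have h0 : (mu r lam E).eval t * (mu r lam (C \ E)).eval t = 0 := by
    rw [← eval_mul, ← hsplit, hC.2]
  rcases mul_eq_zero.1 h0 with h | h
  · exact Or.inr (eq_of_subset_of_card_le hE (hmin E ⟨hE.trans hC.1, h⟩))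
  · have hCE := eq_of_subset_of_card_le sdiff_subset (hmin _ ⟨sdiff_subset.trans hC.1, h⟩)
    exact Or.inl (disjoint_self_iff_empty _ |>.1 <|
      (Finset.sdiff_eq_self_iff_disjoint.1 hCE).symm.mono_right hE)

theorem eval_mu_pos_of_ssubset (hsym : ∀ x y, lam x y = lam y x) (hnonpos : ∀ x y, lam x y ≤ 0)
    (hA : IsConnectedSet lam A) {t : ℝ} (hpos : ∀ x > t, 0 < (mu r lam A).eval x) (hBA : B ⊂ A) :
    0 < (mu r lam B).eval t := by
  induction A using Finset.strongInduction generalizing B with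
  | H A ih =>
  by_contra! hB
  have hB0 : (mu r lam B).eval t = 0 := le_antisymm hB <| (Polynomial.continuous _)
    |>.nonneg_of_forall_gt_pos (eval_mu_pos_of_subset hsym hnonpos hpos hBA.subset)
  obtain ⟨C, hCB, ⟨c, hc⟩, hC, hC0⟩ := exists_isConnectedSet_eval_mu_eq_zero hsym hB0
  have hCA : C ⊂ A := hCB.trans_ssubset hBA
  obtain ⟨x, hx, y, hy, hxy⟩ : ∃ x ∈ C, ∃ y ∈ A \ C, lam x y ≠ 0 := by
    by_contra! h
    rcases hA C hCA.subset h with rfl | rfl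
    exacts [notMem_empty c hc, hCA.ne rfl]
  obtain ⟨hyA, hyC⟩ := mem_sdiff.1 hy
  have hDA : insert y C ⊆ A := insert_subset hyA hCA.subset
  rcases hDA.ssubset_or_eq with hDA | hDA
  · exact (ih _ hDA (hC.insert hsym hx hxy) (eval_mu_pos_of_subset hsym hnonpos hpos hDA.subset)
      (ssubset_insert hyC)).ne' hC0
  have hCy : A.erase y = C := hDA ▸ erase_insert hyC
  have hsum := eval_mu_of_eval_erase_eq_zero hsym hyA (hCy ▸ hC0)
  have hposC : ∀ u ∈ C, 0 < (mu r lam (C.erase u)).eval t := fun u hu =>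
    ih C hCA hC (eval_mu_pos_of_subset hsym hnonpos hpos hCA.subset) (erase_ssubset hu)
  have hyx : lam y x < 0 := (hnonpos y x).lt_of_ne (hsym x y ▸ hxy)
  have hneg : ∑ u ∈ C, lam y u * (mu r lam (C.erase u)).eval t < 0 := by
    simpa using sum_lt_sum (g := fun _ => (0 : ℝ))
      (fun u hu => mul_nonpos_of_nonpos_of_nonneg (hnonpos y u) (hposC u hu).le)
      ⟨x, hx, mul_neg_of_neg_of_pos hyx (hposC x hx)⟩
  rw [hCy] at hsum
  linarith [(Polynomial.continuous _).nonneg_of_forall_gt_pos hpos]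

end MatchingPolynomial

open MatchingPolynomial in
theorem stmt_19_general (n : ℕ) (r : Fin n → ℝ) (lam lam' : Fin n → Fin n → ℝ)
    (hsym : ∀ j k, lam j k = lam k j) (hnonpos : ∀ j k, lam j k ≤ 0)
    (hconn : (wGraph lam).Connected)
    (i j : Fin n) (hij : i ≠ j)
    (hsym' : lam' i j = lam' j i)
    (hlt : lam i j < lam' i j)
    (hother : ∀ a b : Fin n, ¬((a = i ∧ b = j) ∨ (a = j ∧ b = i)) → lam' a b = lam a b)
    (z z' : ℝ)
    (hz : IsGreatest {x : ℝ | (mu r lam (Finset.univ : Finset (Fin n))).IsRoot x} z)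
    (hz' : IsGreatest {x : ℝ | (mu r lam' (Finset.univ : Finset (Fin n))).IsRoot x} z') :
    z' < z := by
  have hlam' : ∀ a b, lam' a b = lam' b a := fun a b => by
    by_cases h : (a = i ∧ b = j) ∨ (a = j ∧ b = i)
    · rcases h with ⟨rfl, rfl⟩ | ⟨rfl, rfl⟩ <;> simp [hsym']
    · rw [hother a b h, hother b a (by tauto), hsym]
  have hsplit := mu_eq_add_of_eq_off_edge (r := r) hsym hlam' (Finset.mem_univ i)
    (Finset.mem_univ j) hij hother
  have hpos : ∀ x > z, 0 < (mu r lam Finset.univ).eval x := fun x =>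
    (mu_monic r lam _).eval_pos_of_forall_isRoot_le fun w hw => hz.2 hw
  have hdel : ∀ x ≥ z, 0 < (mu r lam ((Finset.univ.erase i).erase j)).eval x := by
    intro x hx
    rcases hx.eq_or_lt with rfl | hx
    · exact eval_mu_pos_of_ssubset hsym hnonpos (isConnectedSet_univ hsym hconn) hpos
        ((Finset.erase_subset _ _).trans_ssubset (Finset.erase_ssubset (Finset.mem_univ i)))
    · exact eval_mu_pos_of_subset hsym hnonpos hpos (Finset.subset_univ _) x hx
  by_contra! hzz
  have hroot : (mu r lam' Finset.univ).eval z' = 0 := hz'.1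
  have hnonneg : 0 ≤ (mu r lam Finset.univ).eval z' := by
    rcases hzz.eq_or_lt with rfl | hzz
    exacts [hz.1.eq_zero.ge, (hpos z' hzz).le]
  rw [hsplit, eval_add, eval_mul, eval_C] at hroot
  nlinarith [hdel z' hzz]

/-- if `G` is connected and `G'` is obtained from `G` by replacing the edge
weight `λ_{ij}` with `λ'_{ij}` satisfying `λ_{ij} < λ'_{ij} ≤ 0` (all other weights
unchanged), then the largest root of `μ(G)` is strictly greater than the largest root of
`μ(G')`. -/
theorem stmt_19 (n : ℕ) (hn : 0 < n) (r : Fin n → ℝ) (lam lam' : Fin n → Fin n → ℝ)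
    (hsym : ∀ j k, lam j k = lam k j) (hnonpos : ∀ j k, lam j k ≤ 0)
    (hdiag : ∀ i, lam i i = 0) (hconn : (wGraph lam).Connected)
    (i j : Fin n) (hij : i ≠ j)
    (hsym' : lam' i j = lam' j i)
    (hlt : lam i j < lam' i j) (hle : lam' i j ≤ 0)
    (hother : ∀ a b : Fin n, ¬((a = i ∧ b = j) ∨ (a = j ∧ b = i)) → lam' a b = lam a b)
    (z z' : ℝ)
    (hz : IsGreatest {x : ℝ | (mu r lam (Finset.univ : Finset (Fin n))).IsRoot x} z)
    (hz' : IsGreatest {x : ℝ | (mu r lam' (Finset.univ : Finset (Fin n))).IsRoot x} z') :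
    z' < z :=
  stmt_19_general n r lam lam' hsym hnonpos hconn i j hij hsym' hlt hother z z' hz hz'
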